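/- Let H be a (2k+1)-graph (k ≥ 1), and let G be obtained from H by replacing each vertex v by a cycle C_v of length 2k+1 in which each edge has multiplicity k (so C_v is 2k-regular), with the 2k+1 edges of H at v attached to the 2k+1 distinct vertices of C_v. Then G is a (2k+1)-graph, and the set F of old edges of H forms a perfect matching of G. -/

import Mathlib

/-- A multigraph on vertex type `V` with edge type `E`: each edge has a pair of endpoints. -/
structure Multigraph (V E : Type) where
  ends : E → Sym2 V

namespace Multigraph

variable {V E : Type}

/-- No loops: no edge has equal endpoints. -/
def Loopless (G : Multigraph V E) : Prop := ∀ e, ¬ (G.ends e).IsDiag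

/-- The degree of a vertex: the number of edges incident with it. -/
noncomputable def degree (G : Multigraph V E) (v : V) : ℕ := Nat.card {e | v ∈ G.ends e}

/-- The edge cut `∂(X)`: edges with exactly one end in `X`. -/
def cut (G : Multigraph V E) (X : Set V) : Set E :=
  {e | ∃ u ∈ X, ∃ w ∉ X, G.ends e = s(u, w)}

/-- The underlying simple graph. -/
def toSimple (G : Multigraph V E) : SimpleGraph V where
  Adj u w := u ≠ w ∧ ∃ e, G.ends e = s(u, w)
  symm := ⟨by
    rintro u w ⟨h, e, he⟩
    exact ⟨h.symm, e, by rw [he, Sym2.eq_swap]⟩⟩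
  loopless := ⟨by rintro u ⟨h, _⟩; exact h rfl⟩

/-- Connectivity of a multigraph. -/
def Connected (G : Multigraph V E) : Prop := G.toSimple.Connected

/-- `M` is a perfect matching on the vertex set `A`: every edge of `M` has both ends
in `A` and every vertex of `A` is covered by exactly one edge of `M`. -/
def IsPerfectMatchingOn (G : Multigraph V E) (A : Set V) (M : Set E) : Prop :=
  (∀ e ∈ M, ∀ v ∈ G.ends e, v ∈ A) ∧ ∀ v ∈ A, ∃! e, e ∈ M ∧ v ∈ G.ends e

/-- A perfect matching of `G`. -/
def IsPerfectMatching (G : Multigraph V E) (M : Set E) : Prop :=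
  G.IsPerfectMatchingOn Set.univ M

/-- `θ(G−S)`: the number of odd components of `G − S`. -/
noncomputable def theta (G : Multigraph V E) (S : Set V) : ℕ :=
  Nat.card {c : (G.toSimple.induce Sᶜ).ConnectedComponent // Odd (Nat.card c.supp)}

/-- A barrier: a vertex set `S` with `θ(G−S) = |S|`. -/
def IsBarrier (G : Multigraph V E) (S : Set V) : Prop := G.theta S = Nat.card S

/-- Bi-critical: deleting any two distinct vertices leaves a graph with a perfect matching. -/
def Bicritical (G : Multigraph V E) : Prop :=
  ∀ u v : V, u ≠ v → ∃ M, G.IsPerfectMatchingOn {u, v}ᶜ M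

/-- Bipartite multigraph. -/
def Bipartite (G : Multigraph V E) : Prop := G.toSimple.Colorable 2

/-- `k`-vertex-connected: deleting fewer than `k` vertices leaves a connected graph. -/
def VertexConnected (G : Multigraph V E) (k : ℕ) : Prop :=
  ∀ S : Set V, Nat.card S < k → (G.toSimple.induce Sᶜ).Connected

/-- A brick: non-bipartite, bi-critical and 3-vertex-connected. -/
def IsBrick (G : Multigraph V E) : Prop :=
  ¬ G.Bipartite ∧ G.Bicritical ∧ G.VertexConnected 3

/-- A proper edge coloring with `k` colors exists. -/
def EdgeColorable (G : Multigraph V E) (k : ℕ) : Prop :=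
  ∃ c : E → Fin k, ∀ e f, e ≠ f → (∃ v, v ∈ G.ends e ∧ v ∈ G.ends f) → c e ≠ c f

/-- A non-trivial odd vertex set: odd cardinality, different from `1` and `|V|−1`. -/
def NontrivialOdd (_G : Multigraph V E) (X : Set V) : Prop :=
  Odd (Nat.card X) ∧ Nat.card X ≠ 1 ∧ Nat.card X ≠ Nat.card V - 1

/-- An `r`-graph: a connected loopless `r`-regular multigraph in which every odd
vertex set has at least `r` edges leaving it. -/
def IsRGraph (G : Multigraph V E) (r : ℕ) : Prop :=
  G.Loopless ∧ G.Connected ∧ (∀ v, G.degree v = r) ∧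
    ∀ X : Set V, Odd (Nat.card X) → r ≤ Nat.card (G.cut X)

open Classical in
/-- The projection identifying the complement of `X` to a single new vertex. -/
noncomputable def proj (X : Set V) (v : V) : ↥X ⊕ Unit :=
  if h : v ∈ X then .inl ⟨v, h⟩ else .inr ()

/-- Contract the complement of `X` to a single vertex, deleting the resulting loops
(i.e. the edges with both ends outside `X`) but keeping multiplicities. -/
noncomputable def contract (G : Multigraph V E) (X : Set V) :
    Multigraph (↥X ⊕ Unit) {e // ¬ ((G.ends e).map (proj X)).IsDiag} where
  ends e := (G.ends e.1).map (proj X)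

/-- The spanning sub-multigraph with edge set `A`. -/
def restrict (G : Multigraph V E) (A : Set E) : Multigraph V ↥A where
  ends e := G.ends e.1

open Classical in
/-- Expansion: replace every vertex `v` by a cycle `C_v` of length `2k+1` in which every
edge has multiplicity `k`; the `2k+1` old edges at `v` are attached to the `2k+1` distinct
vertices of `C_v` according to the bijection `φ v`. -/
noncomputable def expand (H : Multigraph V E) (k : ℕ)
    (φ : (v : V) → {e // v ∈ H.ends e} ≃ ZMod (2 * k + 1)) :
    Multigraph (V × ZMod (2 * k + 1)) (E ⊕ V × ZMod (2 * k + 1) × Fin k) where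
  ends := fun e => match e with
    | .inl e => (H.ends e).map (fun v => (v, if h : v ∈ H.ends e then φ v ⟨e, h⟩ else 0))
    | .inr (v, i, _) => s((v, i), (v, i + 1))

end Multigraph

/-!
Each vertex `(v, i)` of the expansion meets exactly one old edge and `k` copies of each of
the two cycle edges at it, so the expansion is `(2k+1)`-regular; it is connected because
every `C_v` is and `H` is. For an odd set `X`, the handshake lemma modulo 2 makes `|∂X|` odd.
If `X` splits some `C_v`, then `∂X` contains at least two of its `k`-fold cycle edges, so
`|∂X| ≥ 2k` and parity gives `2k+1`. Otherwise `X` is the union of the cycles `C_v` over a set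
`Y` with `|X| = (2k+1)|Y|`, so `Y` is odd and the old edges of `∂_H(Y)` already give `2k+1`
edges of `∂X`.
-/

lemma ZMod.self_ne_add_one {n : ℕ} (hn : n ≠ 1) (i : ZMod n) : i ≠ i + 1 :=
  have := ZMod.nontrivial_iff.mpr hn
  left_ne_add.mpr one_ne_zero

lemma ZMod.exists_mem_add_one_notMem {n : ℕ} [NeZero n] {s : Set (ZMod n)} {i j : ZMod n}
    (hi : i ∈ s) (hj : j ∉ s) : ∃ p ∈ s, p + 1 ∉ s := by
  by_contra! hclosed
  have hstep : ∀ m : ℕ, i + m ∈ s := by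
    intro m
    induction m with
    | zero => simpa using hi
    | succ m ih => simpa [add_assoc] using hclosed _ ih
  obtain ⟨m, hm⟩ := ZMod.natCast_zmod_surjective (j - i)
  exact hj (by simpa [hm] using hstep m)

lemma Set.card_preimage_fst {α β : Type*} (s : Set α) :
    Nat.card (Prod.fst ⁻¹' s : Set (α × β)) = Nat.card s * Nat.card β := by
  rw [← Set.prod_univ, Nat.card_congr (Equiv.Set.prod _ _), Nat.card_prod, Nat.card_univ]

namespace Multigraph

variable {V E : Type}

section Parity

variable (G : Multigraph V E)

lemma mem_cut_of_ends_eq {X : Set V} {e : E} {a b : V} (he : G.ends e = s(a, b)) :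
    e ∈ G.cut X ↔ (a ∈ X ∧ b ∉ X) ∨ (b ∈ X ∧ a ∉ X) := by
  simp only [cut, Set.mem_ofPred_eq, he, Sym2.eq_iff]
  constructor
  · rintro ⟨u, hu, w, hw, ⟨rfl, rfl⟩ | ⟨rfl, rfl⟩⟩
    exacts [Or.inl ⟨hu, hw⟩, Or.inr ⟨hu, hw⟩]
  · rintro (⟨ha, hb⟩ | ⟨hb, ha⟩)
    exacts [⟨a, ha, b, hb, Or.inl ⟨rfl, rfl⟩⟩, ⟨b, hb, a, ha, Or.inr ⟨rfl, rfl⟩⟩]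

lemma sum_mem_ends_eq_ite_mem_cut [DecidableEq V] (hG : G.Loopless) (X : Finset V) (e : E)
    [Decidable (e ∈ G.cut X)] :
    ∑ v ∈ X, (if v ∈ G.ends e then 1 else 0 : ZMod 2) = if e ∈ G.cut X then 1 else 0 := by
  induction he : G.ends e using Sym2.ind with
  | _ a b =>
    have hab : a ≠ b := by simpa [he] using hG e
    have hsplit : ∀ v, (if v ∈ s(a, b) then 1 else 0 : ZMod 2) =
        (if v = a then 1 else 0) + (if v = b then 1 else 0) := by
      intro v
      by_cases hva : v = a <;> by_cases hvb : v = b <;> simp_all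
    simp only [hsplit, Finset.sum_add_distrib, Finset.sum_ite_eq', mem_cut_of_ends_eq G he,
      Finset.mem_coe]
    by_cases ha : a ∈ X <;> by_cases hb : b ∈ X <;> simp [ha, hb]; decide

variable [Fintype E]

lemma degree_cast_zmod_two [DecidableEq V] (v : V) :
    (G.degree v : ZMod 2) = ∑ e, if v ∈ G.ends e then 1 else 0 := by
  rw [degree, ← Finset.natCast_card_filter, ← Fintype.card_subtype, Nat.card_eq_fintype_card]
  rfl

lemma card_cut_cast_zmod_two [DecidableEq V] (hG : G.Loopless) (X : Finset V) :
    (Nat.card (G.cut X) : ZMod 2) = ∑ v ∈ X, (G.degree v : ZMod 2) := by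
  classical
  simp only [degree_cast_zmod_two]
  rw [Finset.sum_comm, Fintype.sum_congr _ _ fun e => sum_mem_ends_eq_ite_mem_cut G hG X e,
    ← Finset.natCast_card_filter, Nat.card_eq_card_toFinset]
  congr
  ext
  simp

lemma odd_card_cut [Fintype V] (hG : G.Loopless) (hdeg : ∀ v, Odd (G.degree v)) (X : Set V)
    (hX : Odd (Nat.card X)) : Odd (Nat.card (G.cut X)) := by
  classical
  rw [← ZMod.natCast_eq_one_iff_odd] at hX ⊢
  rw [← Set.coe_toFinset X, card_cut_cast_zmod_two G hG,
    Finset.sum_congr rfl fun v _ => ZMod.natCast_eq_one_iff_odd.mpr (hdeg v)]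
  simpa [Nat.card_eq_card_toFinset] using hX

end Parity

section Expansion

variable (H : Multigraph V E) {k : ℕ}
  (φ : (v : V) → {e // v ∈ H.ends e} ≃ ZMod (2 * k + 1))

lemma mem_expand_ends_inl {e : E} {u : V} {i : ZMod (2 * k + 1)} :
    (u, i) ∈ (H.expand k φ).ends (.inl e) ↔ ((φ u).symm i : E) = e := by
  simp only [expand, Sym2.mem_map, Prod.mk.injEq]
  constructor
  · rintro ⟨u, hu, rfl, hi⟩
    rw [dif_pos hu] at hi
    rw [← hi, Equiv.symm_apply_apply]
  · rintro rfl
    refine ⟨u, ((φ u).symm i).2, rfl, ?_⟩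
    rw [dif_pos ((φ u).symm i).2]
    exact (φ u).apply_symm_apply i

lemma mem_expand_ends_inr {u v : V} {i j : ZMod (2 * k + 1)} {t : Fin k} :
    (u, i) ∈ (H.expand k φ).ends (.inr (v, j, t)) ↔ u = v ∧ (i = j ∨ i = j + 1) := by
  simp only [expand, Sym2.mem_iff, Prod.mk.injEq]
  tauto

lemma expand_ends_inl_eq {e : E} {u w : V} (he : H.ends e = s(u, w)) :
    ∃ i j, (H.expand k φ).ends (.inl e) = s((u, i), (w, j)) :=
  ⟨_, _, (congrArg (Sym2.map _) he).trans (Sym2.map_mk _ _ _)⟩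

lemma expand_loopless (hH : H.Loopless) : (H.expand k φ).Loopless := by
  rintro (e | ⟨v, i, t⟩) hdiag
  · exact hH e ((Sym2.isDiag_map fun _ _ h => congrArg Prod.fst h).mp hdiag)
  · exact ZMod.self_ne_add_one (by have := t.pos; omega) i
      (congrArg Prod.snd (Sym2.mk_isDiag_iff.mp hdiag))

lemma expand_degree (v : V) (i : ZMod (2 * k + 1)) :
    (H.expand k φ).degree (v, i) = 2 * k + 1 := by
  let f : Unit ⊕ Fin k ⊕ Fin k → E ⊕ V × ZMod (2 * k + 1) × Fin k :=
    Sum.elim (fun _ => .inl ((φ v).symm i))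
      (Sum.elim (fun t => .inr (v, i, t)) fun t => .inr (v, i - 1, t))
  have hf : f.Injective := by
    refine Function.injective_of_subsingleton _ |>.sumElim ?_ (by simp)
    refine .sumElim (fun t t' h => by simpa using h) (fun t t' h => by simpa using h)
      fun t _ h => ?_
    simp only [Sum.inr.injEq, Prod.mk.injEq] at h
    exact ZMod.self_ne_add_one (by have := t.pos; omega) (i - 1) (by rw [sub_add_cancel, ← h.2.1])
  have hrange : {e | (v, i) ∈ (H.expand k φ).ends e} = Set.range f := by
    ext (e | ⟨w, j, t⟩)
    · simp [mem_expand_ends_inl, f, eq_comm]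
    · simp [mem_expand_ends_inr, f, sub_eq_iff_eq_add, and_or_left]
  rw [degree, hrange, Nat.card_range_of_injective hf]
  simp
  ring

lemma expand_isPerfectMatching : (H.expand k φ).IsPerfectMatching (Set.range Sum.inl) := by
  refine ⟨fun _ _ _ _ => Set.mem_univ _, fun ⟨v, i⟩ _ =>
    ⟨.inl ((φ v).symm i), ⟨⟨_, rfl⟩, (H.mem_expand_ends_inl φ).mpr rfl⟩, ?_⟩⟩
  rintro _ ⟨⟨e, rfl⟩, he⟩
  rw [(H.mem_expand_ends_inl φ).mp he]

lemma expand_reachable_add_one (v : V) (i : ZMod (2 * k + 1)) :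
    (H.expand k φ).toSimple.Reachable (v, i) (v, i + 1) := by
  rcases Nat.eq_zero_or_pos k with rfl | hk
  · rw [Subsingleton.elim (α := ZMod 1) (i + 1) i]
  · exact SimpleGraph.Adj.reachable
      ⟨fun h => ZMod.self_ne_add_one (by omega) i (congrArg Prod.snd h),
        .inr (v, i, ⟨0, hk⟩), rfl⟩

lemma expand_reachable_of_fst_eq (v : V) (i j : ZMod (2 * k + 1)) :
    (H.expand k φ).toSimple.Reachable (v, i) (v, j) := by
  obtain ⟨m, hm⟩ := ZMod.natCast_zmod_surjective (j - i)
  rw [eq_add_of_sub_eq' hm.symm]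
  clear hm
  induction m with
  | zero => simp
  | succ m ih => simpa [add_assoc] using ih.trans (H.expand_reachable_add_one φ v _)

lemma expand_reachable_of_adj {u w : V} (h : H.toSimple.Adj u w) (i j : ZMod (2 * k + 1)) :
    (H.expand k φ).toSimple.Reachable (u, i) (w, j) := by
  obtain ⟨hne, e, he⟩ := h
  obtain ⟨i', j', he'⟩ := H.expand_ends_inl_eq φ he
  have hadj : (H.expand k φ).toSimple.Adj (u, i') (w, j') :=
    ⟨fun h => hne (congrArg Prod.fst h), .inl e, he'⟩
  exact (H.expand_reachable_of_fst_eq φ u i i').trans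
    (hadj.reachable.trans (H.expand_reachable_of_fst_eq φ w j' j))

lemma expand_connected (hH : H.Connected) : (H.expand k φ).Connected := by
  have := hH.nonempty
  refine ⟨fun ⟨u, i⟩ ⟨w, j⟩ => ?_⟩
  obtain ⟨p⟩ := hH.preconnected u w
  induction p generalizing i with
  | nil => exact H.expand_reachable_of_fst_eq φ _ i j
  | cons h _ ih => exact (H.expand_reachable_of_adj φ h i 0).trans (ih 0)

lemma two_mul_le_card_expand_cut [Finite V] [Finite E] {X : Set (V × ZMod (2 * k + 1))} {v : V}
    {i j : ZMod (2 * k + 1)} (hi : (v, i) ∈ X) (hj : (v, j) ∉ X) :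
    2 * k ≤ Nat.card ((H.expand k φ).cut X) := by
  obtain ⟨p, hp, hp'⟩ := ZMod.exists_mem_add_one_notMem (s := {x | (v, x) ∈ X}) hi hj
  obtain ⟨q, hq, hq'⟩ :=
    ZMod.exists_mem_add_one_notMem (s := {x | (v, x) ∉ X}) hj (not_not.mpr hi)
  let f : Fin k ⊕ Fin k → (H.expand k φ).cut X :=
    Sum.elim (fun t => ⟨.inr (v, p, t), (v, p), hp, (v, p + 1), hp', rfl⟩)
      fun t => ⟨.inr (v, q, t), (v, q + 1), not_not.mp hq', (v, q), hq, Sym2.eq_swap⟩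
  have hf : f.Injective := by
    refine .sumElim (fun t t' h => by simpa using congrArg Subtype.val h)
      (fun t t' h => by simpa using congrArg Subtype.val h) fun t t' h => ?_
    have hpq : p = q ∧ t = t' := by simpa using congrArg Subtype.val h
    exact hq (hpq.1 ▸ hp)
  simpa [two_mul] using Nat.card_le_card_of_injective f hf

lemma card_cut_le_card_expand_cut [Finite V] [Finite E] (Y : Set V) :
    Nat.card (H.cut Y) ≤ Nat.card ((H.expand k φ).cut (Prod.fst ⁻¹' Y)) := by
  refine Nat.card_le_card_of_injective (fun e => ⟨.inl e, ?_⟩)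
    fun e e' h => Subtype.ext (by simpa using h)
  obtain ⟨u, hu, w, hw, he⟩ := e.2
  obtain ⟨i, j, he'⟩ := H.expand_ends_inl_eq φ he
  exact ⟨(u, i), hu, (w, j), hw, he'⟩

lemma le_card_expand_cut [Fintype V] [Fintype E] (hH : H.IsRGraph (2 * k + 1))
    (X : Set (V × ZMod (2 * k + 1))) (hX : Odd (Nat.card X)) :
    2 * k + 1 ≤ Nat.card ((H.expand k φ).cut X) := by
  by_cases hsplit : ∃ v i j, (v, i) ∈ X ∧ (v, j) ∉ X
  · obtain ⟨v, i, j, hi, hj⟩ := hsplit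
    obtain ⟨m, hm⟩ := odd_card_cut _ (H.expand_loopless φ hH.1)
      (fun x => by rw [expand_degree]; exact odd_two_mul_add_one k) X hX
    have := H.two_mul_le_card_expand_cut φ hi hj
    omega
  · push Not at hsplit
    have hXY : X = Prod.fst ⁻¹' {v | (v, 0) ∈ X} := by
      ext ⟨v, i⟩
      exact ⟨hsplit v i 0, hsplit v 0 i⟩
    rw [hXY, Set.card_preimage_fst, Nat.odd_mul] at hX
    rw [hXY]
    exact (hH.2.2.2 _ hX.1).trans (H.card_cut_le_card_expand_cut φ _)

end Expansion

end Multigraph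

theorem expand_is_rGraph_general {V E : Type} [Fintype V] [Fintype E]
    (k : ℕ) (H : Multigraph V E) (hH : H.IsRGraph (2 * k + 1))
    (φ : (v : V) → {e : E // v ∈ H.ends e} ≃ ZMod (2 * k + 1)) :
    (H.expand k φ).IsRGraph (2 * k + 1) ∧
    (H.expand k φ).IsPerfectMatching (Set.range Sum.inl) :=
  ⟨⟨H.expand_loopless φ hH.1, H.expand_connected φ hH.2.1, fun _ => H.expand_degree φ _ _,
    H.le_card_expand_cut φ hH⟩, H.expand_isPerfectMatching φ⟩

/-- The cycle expansion of a (2k+1)-graph H (k ≥ 1) is a (2k+1)-graph, and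
the old edges of H form a perfect matching of it. -/
theorem expand_is_rGraph {V E : Type} [Fintype V] [Fintype E]
    (k : ℕ) (hk : 1 ≤ k) (H : Multigraph V E) (hH : H.IsRGraph (2 * k + 1))
    (φ : (v : V) → {e : E // v ∈ H.ends e} ≃ ZMod (2 * k + 1)) :
    (H.expand k φ).IsRGraph (2 * k + 1) ∧
    (H.expand k φ).IsPerfectMatching (Set.range Sum.inl) :=
  expand_is_rGraph_general k H hH φ
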